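/- Let n ≥ 2 be a natural number and let M be any closed subspace of ℓ¹ with codimension < n. Then sup{‖σ(x)‖_∞ : x ∈ M, ‖x‖₁ ≤ 1} ≥ 1/2. (Consequently the n-th Gelfand number of σ satisfies c_n(σ) ≥ 1/2.) -/

import Mathlib

noncomputable section

/-- The space `ℓ¹` of absolutely summable real sequences. -/
abbrev ell1 : Type := lp (fun _ : ℕ => ℝ) 1

/-- The space `ℓ^∞` of bounded real sequences with the supremum norm. -/
abbrev ellInf : Type := lp (fun _ : ℕ => ℝ) ⊤

/-- The subspace of `ℓ^∞` consisting of convergent sequences. -/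
def convSubspace : Submodule ℝ ellInf where
  carrier := {x | ∃ L : ℝ, Filter.Tendsto (fun k => x k) Filter.atTop (nhds L)}
  add_mem' := by
    rintro x y ⟨L, hL⟩ ⟨M, hM⟩
    exact ⟨L + M, by simpa [lp.coeFn_add, Pi.add_apply] using hL.add hM⟩
  zero_mem' :=
    ⟨0, by simpa [lp.coeFn_zero] using
      (tendsto_const_nhds : Filter.Tendsto (fun _ : ℕ => (0:ℝ)) _ _)⟩
  smul_mem' := by
    rintro c x ⟨L, hL⟩
    exact ⟨c * L, by simpa [lp.coeFn_smul, Pi.smul_apply, smul_eq_mul] using hL.const_mul c⟩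

/-- The space `c` of convergent real sequences, normed by the supremum norm. -/
abbrev cSpace : Type := ↥convSubspace

/-- `σ` is the summation operator: `σ(x)ₖ = ∑_{j=1}^k x_j` (`0`-indexed here). -/
def IsSummation (σ : ell1 →L[ℝ] cSpace) : Prop :=
  ∀ x : ell1, ∀ k : ℕ, (↑(σ x) : ellInf) k = ∑ j ∈ Finset.range (k + 1), x j

/-! Since `M` has finite codimension, `ℓ¹ ⧸ M` is a finite-dimensional normed space, so for every
`δ > 0` two images of unit vectors `eᵢ`, `eⱼ` with `i < j` lie within `δ` of each other there. Then
`eᵢ - eⱼ`, of norm `2`, is within `δ` of `M`, while `σ (eᵢ - eⱼ)` has `i`-th coordinate `1`; hence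
the norm of `σ` restricted to `M`, which is the supremum in question, is at least `1/2`. -/

open Filter Set Topology

theorem exists_lt_dist_lt_of_isBounded_range {X : Type*} [PseudoMetricSpace X] [ProperSpace X]
    {u : ℕ → X} (hu : Bornology.IsBounded (range u)) {δ : ℝ} (hδ : 0 < δ) :
    ∃ i j, i < j ∧ dist (u i) (u j) < δ := by
  obtain ⟨_, _, φ, hφ, hlim⟩ := tendsto_subseq_of_bounded hu (mem_range_self (f := u))
  obtain ⟨N, hN⟩ := Metric.cauchySeq_iff'.1 hlim.cauchySeq δ hδ
  exact ⟨φ N, φ (N + 1), hφ N.lt_succ_self, by simpa [dist_comm] using hN (N + 1) N.le_succ⟩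

namespace ContinuousLinearMap

variable {𝕜 E F : Type*} [NormedAddCommGroup E] [NormedAddCommGroup F]

theorem sSup_submodule_unitClosedBall_eq_norm_comp_subtypeL [DenselyNormedField 𝕜]
    [NormedSpace 𝕜 E] [NormedSpace 𝕜 F] (T : E →L[𝕜] F) (M : Submodule 𝕜 E) :
    sSup {s : ℝ | ∃ x : E, x ∈ M ∧ ‖x‖ ≤ 1 ∧ s = ‖T x‖} = ‖T ∘L M.subtypeL‖ := by
  rw [← sSup_unitClosedBall_eq_norm]
  congr 1
  ext s
  constructor
  · rintro ⟨x, hxM, hx, rfl⟩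
    exact ⟨⟨x, hxM⟩, by simpa using hx, rfl⟩
  · rintro ⟨x, hx, rfl⟩
    exact ⟨x, x.2, by simpa using hx, rfl⟩

theorem le_mul_norm_comp_subtypeL_of_forall_norm_mk_lt [NontriviallyNormedField 𝕜]
    [NormedSpace 𝕜 E] [NormedSpace 𝕜 F] (T : E →L[𝕜] F) (M : Submodule 𝕜 E) {r c : ℝ}
    (h : ∀ δ > 0, ∃ v, ‖v‖ ≤ r ∧ c ≤ ‖T v‖ ∧ ‖(Submodule.Quotient.mk v : E ⧸ M)‖ < δ) :
    c ≤ r * ‖T ∘L M.subtypeL‖ := by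
  set a := ‖T ∘L M.subtypeL‖
  have hbound : ∀ δ > 0, c ≤ (r + δ) * a + ‖T‖ * δ := by
    intro δ hδ
    obtain ⟨v, hvr, hcv, hvM⟩ := h δ hδ
    obtain ⟨w, hwv, hw⟩ := Submodule.Quotient.norm_mk_lt (Submodule.Quotient.mk v : E ⧸ M)
      (sub_pos.2 hvM)
    have hmM : v - w ∈ M := (Submodule.Quotient.eq M).1 hwv.symm
    have hw' : ‖w‖ ≤ δ := by linarith
    have hTm : ‖T (v - w)‖ ≤ a * ‖v - w‖ := (T ∘L M.subtypeL).le_opNorm ⟨v - w, hmM⟩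
    calc c ≤ ‖T v‖ := hcv
      _ = ‖T (v - w) + T w‖ := by rw [← map_add, sub_add_cancel]
      _ ≤ a * ‖v - w‖ + ‖T‖ * ‖w‖ := (norm_add_le _ _).trans (add_le_add hTm (T.le_opNorm w))
      _ ≤ a * (r + δ) + ‖T‖ * δ := by
        gcongr
        exact (norm_sub_le _ _).trans (add_le_add hvr hw')
      _ = (r + δ) * a + ‖T‖ * δ := by ring
  have hlim : Tendsto (fun δ => (r + δ) * a + ‖T‖ * δ) (𝓝[>] 0) (𝓝 (r * a)) := by
    have hcont : Continuous fun δ : ℝ => (r + δ) * a + ‖T‖ * δ := by fun_prop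
    simpa using tendsto_nhdsWithin_of_tendsto_nhds (hcont.tendsto 0)
  exact ge_of_tendsto hlim (eventually_nhdsWithin_of_forall hbound)

end ContinuousLinearMap

namespace IsSummation

variable {σ : ell1 →L[ℝ] cSpace}

theorem apply_single (hσ : IsSummation σ) (i k : ℕ) :
    (↑(σ (lp.single 1 i 1)) : ellInf) k = if i ≤ k then 1 else 0 := by
  rw [hσ]
  simp [Finset.sum_pi_single']

theorem one_le_norm_apply_single_sub_single (hσ : IsSummation σ) {i j : ℕ} (hij : i < j) :
    1 ≤ ‖σ (lp.single 1 i 1 - lp.single 1 j 1)‖ := by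
  calc (1 : ℝ) = ‖(↑(σ (lp.single 1 i 1 - lp.single 1 j 1)) : ellInf) i‖ := by
        simp [hσ.apply_single, hij.not_ge]
    _ ≤ ‖σ (lp.single 1 i 1 - lp.single 1 j 1)‖ := lp.norm_apply_le_norm ENNReal.top_ne_zero _ i

end IsSummation

theorem gelfand_lower_bound_summation_general (n : ℕ)
    (σ : ell1 →L[ℝ] cSpace) (hσ : IsSummation σ)
    (M : Submodule ℝ ell1) (hMclosed : IsClosed (M : Set ell1))
    (hM : Module.rank ℝ (ell1 ⧸ M) < (n : Cardinal)) :
    1 / 2 ≤ sSup {s : ℝ | ∃ x : ell1, x ∈ M ∧ ‖x‖ ≤ 1 ∧ s = ‖σ x‖} := by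
  have : FiniteDimensional ℝ (ell1 ⧸ M) :=
    Module.rank_lt_aleph0_iff.1 (hM.trans Cardinal.natCast_lt_aleph0)
  set e : ℕ → ell1 := fun i => lp.single 1 i 1
  have he : ∀ i, ‖e i‖ = 1 := fun i => by simp [e, lp.norm_single]
  have hbdd : Bornology.IsBounded (range fun i => (Submodule.Quotient.mk (e i) : ell1 ⧸ M)) :=
    isBounded_iff_forall_norm_le.2 ⟨1, by
      rintro _ ⟨i, rfl⟩
      exact (Submodule.Quotient.norm_mk_le M (e i)).trans (he i).le⟩
  have hkey : 1 ≤ 2 * ‖σ ∘L M.subtypeL‖ :=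
    σ.le_mul_norm_comp_subtypeL_of_forall_norm_mk_lt M fun δ hδ => by
      obtain ⟨i, j, hij, hdist⟩ := exists_lt_dist_lt_of_isBounded_range hbdd hδ
      refine ⟨e i - e j, ?_, hσ.one_le_norm_apply_single_sub_single hij, ?_⟩
      · linarith [norm_sub_le (e i) (e j), he i, he j]
      · rwa [dist_eq_norm, ← Submodule.Quotient.mk_sub] at hdist
  rw [σ.sSup_submodule_unitClosedBall_eq_norm_comp_subtypeL M]
  linarith

/-- Lower bound for the Gelfand numbers of the summation operator: for any closed subspace
`M ⊆ ℓ¹` of codimension `< n` (`n ≥ 2`), `sup {‖σ(x)‖_∞ : x ∈ M, ‖x‖₁ ≤ 1} ≥ 1/2`. -/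
theorem gelfand_lower_bound_summation (n : ℕ) (hn : 2 ≤ n)
    (σ : ell1 →L[ℝ] cSpace) (hσ : IsSummation σ)
    (M : Submodule ℝ ell1) (hMclosed : IsClosed (M : Set ell1))
    (hM : Module.rank ℝ (ell1 ⧸ M) < (n : Cardinal)) :
    1 / 2 ≤ sSup {s : ℝ | ∃ x : ell1, x ∈ M ∧ ‖x‖ ≤ 1 ∧ s = ‖σ x‖} :=
  gelfand_lower_bound_summation_general n σ hσ M hMclosed hM
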